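/- arXiv:math/0505462 — 4 statements merged into one kernel-verified Lean document; each statement's English description precedes it below -/
import Mathlib

section
/- Suppose 0 < R < 2, R ≠ R_n, and x = (C, J_1, …, J_n) ∈ M_n(R) has two adjacent arms stretched out: a_k = b_k and a_{k+1} = b_{k+1} for some k (indices mod n). Then the 2n + 2 vectors in ℝ^{2n+2} consisting of the gradients ∇f_1(x), …, ∇f_{2n}(x) together with the two standard basis vectors corresponding to the coordinates p_k and p_{k+1} (the first coordinates of J_k and J_{k+1}) are linearly independent; equivalently, the (2n+2)×(2n+2) matrix with these rows is invertible, so that (p_k, p_{k+1}) serve as local coordinates on M_n(R) near x. -/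
/-- Euclidean norm of a vector in ℝ². -/
noncomputable def enorm2 (v : ℝ × ℝ) : ℝ := Real.sqrt (v.1 ^ 2 + v.2 ^ 2)

/-- The k-th fixed endpoint `B_k = (R cos(2kπ/n), R sin(2kπ/n))` (indices from 0). -/
noncomputable def Bpt (n : ℕ) (R : ℝ) (k : Fin n) : ℝ × ℝ :=
  (R * Real.cos (2 * (k.val : ℝ) * Real.pi / (n : ℝ)),
   R * Real.sin (2 * (k.val : ℝ) * Real.pi / (n : ℝ)))

/-- The configuration space `M_n(R)` of spiders with `n` arms of radius `R`,
as a subset of `(ℝ²)^{n+1} ≅ ℝ^{2n+2}`: a pair `(C, J)` with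
`|C − J_k| = 1` and `|J_k − B_k| = 1` for all `k`. -/
noncomputable def MSpace (n : ℕ) (R : ℝ) : Set ((ℝ × ℝ) × (Fin n → ℝ × ℝ)) :=
  {x | ∀ k : Fin n, enorm2 (x.1 - x.2 k) = 1 ∧ enorm2 (x.2 k - Bpt n R k) = 1}

/-- `d_n`, the maximum distance between `n`-th roots of unity. -/
noncomputable def dmax (n : ℕ) : ℝ :=
  if Even n then 2
  else Real.sqrt (2 - 2 * Real.cos (2 * ((n / 2 : ℕ) : ℝ) * Real.pi / (n : ℝ)))

/-- The critical radius `R_n = 2 / d_n`. -/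
noncomputable def Rcrit (n : ℕ) : ℝ := 2 / dmax n

/-- The gradient of `f_{2k−1}(x) = |C − J_k|² − 1` at `x`: the vector with `2 a_k`
in the `C` slot and `−2 a_k` in the `J_k` slot (and `0` elsewhere), where
`a_k = C − J_k`. -/
noncomputable def grad1 (n : ℕ) (x : (ℝ × ℝ) × (Fin n → ℝ × ℝ)) (k : Fin n) :
    (ℝ × ℝ) × (Fin n → ℝ × ℝ) :=
  ((2 : ℝ) • (x.1 - x.2 k),
   fun j => if j = k then -((2 : ℝ) • (x.1 - x.2 k)) else 0)

/-- The gradient of `f_{2k}(x) = |J_k − B_k|² − 1` at `x`: the vector with `2 b_k`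
in the `J_k` slot (and `0` elsewhere), where `b_k = J_k − B_k`. -/
noncomputable def grad2 (n : ℕ) (R : ℝ) (x : (ℝ × ℝ) × (Fin n → ℝ × ℝ)) (k : Fin n) :
    (ℝ × ℝ) × (Fin n → ℝ × ℝ) :=
  ((0 : ℝ × ℝ),
   fun j => if j = k then (2 : ℝ) • (x.2 k - Bpt n R k) else 0)

/-- The standard basis vector of `ℝ^{2n+2}` corresponding to the coordinate `p_k`
(the first coordinate of `J_k`). -/
noncomputable def epk (n : ℕ) (k : Fin n) : (ℝ × ℝ) × (Fin n → ℝ × ℝ) :=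
  ((0 : ℝ × ℝ), fun j => if j = k then ((1 : ℝ), (0 : ℝ)) else 0)


/-!
In a vanishing combination `∑ αⱼ ∇f_{2j-1} + βⱼ ∇f_{2j} + γ e_{p_k} + γ' e_{p_{k+1}}`, the `J_j`
slot gives `αⱼ aⱼ = βⱼ bⱼ` for `j ≠ k, k+1` and the `C` slot gives `∑ αⱼ aⱼ = 0`. For `j ≠ k, k+1`
the unit vectors `aⱼ, bⱼ` are independent: `aⱼ = bⱼ` would put the three points `B_j, B_k, B_{k+1}`
on both the circle `|z| = R` and the circle of radius 2 about `C ≠ 0`, and `aⱼ = -bⱼ` means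
`C = B_j` is at distance 2 from the adjacent `B_k, B_{k+1}`, which forces `n` odd and `R = R_n`.
What is left of the `C` slot is `α_k a_k + α_{k+1} a_{k+1} = 0`, and `a_k ≠ ±a_{k+1}` because
`B_k ≠ B_{k+1}` and `|B_{k+1} - B_k| ≤ 2R < 4`. Finally the `J_k` slot reads `β_k a_k + γ e₁ = 0`,
and `a_k` is not horizontal: the chord `B_{k+1} - B_k` has length `2R sin(π/n)` and is orthogonal
to the direction `(2k+1)π/n`, and `|sin((2k+1)π/n)|` is either 0 or at least
`sin(π/n) > R sin(π/n) / 2`.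
-/

open Real

lemma enorm2_eq_norm (v : ℝ × ℝ) : enorm2 v = ‖WithLp.toLp 2 v‖ := by
  rw [WithLp.prod_norm_eq_of_L2, enorm2]
  simp

lemma enorm2_sq (v : ℝ × ℝ) : enorm2 v ^ 2 = v.1 ^ 2 + v.2 ^ 2 :=
  Real.sq_sqrt (by positivity)

lemma enorm2_sub_comm (u v : ℝ × ℝ) : enorm2 (u - v) = enorm2 (v - u) := by
  simp only [enorm2_eq_norm, WithLp.toLp_sub, norm_sub_rev]

lemma enorm2_smul (c : ℝ) (v : ℝ × ℝ) : enorm2 (c • v) = |c| * enorm2 v := by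
  simp only [enorm2_eq_norm, WithLp.toLp_smul, norm_smul, Real.norm_eq_abs]

lemma enorm2_sub_le (u v : ℝ × ℝ) : enorm2 (u - v) ≤ enorm2 u + enorm2 v := by
  simp only [enorm2_eq_norm, WithLp.toLp_sub]
  exact norm_sub_le _ _

lemma enorm2_eq_zero {v : ℝ × ℝ} : enorm2 v = 0 ↔ v = 0 := by
  rw [enorm2_eq_norm, norm_eq_zero, WithLp.toLp_eq_zero]

lemma linearIndependent_pair_of_enorm2_eq {u v : ℝ × ℝ} (h : enorm2 u = enorm2 v)
    (h₁ : u ≠ v) (h₂ : u ≠ -v) : LinearIndependent ℝ ![u, v] := by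
  have hu : enorm2 u ≠ 0 := by
    rw [Ne, h, enorm2_eq_zero]
    rintro rfl
    exact h₂ (by rw [neg_zero, ← enorm2_eq_zero, h, enorm2_eq_zero])
  refine (LinearIndependent.pair_iff' (mt enorm2_eq_zero.2 hu)).2 fun c hc => ?_
  have hc1 : |c| = 1 := by
    rw [← hc, enorm2_smul] at h
    exact (mul_eq_right₀ hu).1 h.symm
  rcases abs_eq (zero_le_one' ℝ) |>.1 hc1 with rfl | rfl
  · exact h₁ (by simpa using hc)
  · exact h₂ (by rw [← hc]; simp)

lemma eq_or_eq_of_enorm2_sub_eq {c₁ c₂ p₁ p₂ p : ℝ × ℝ} {r₁ r₂ : ℝ} (hc : c₁ ≠ c₂)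
    (hp : p₁ ≠ p₂) (hp₁c₁ : enorm2 (p₁ - c₁) = r₁) (hp₂c₁ : enorm2 (p₂ - c₁) = r₁)
    (hpc₁ : enorm2 (p - c₁) = r₁) (hp₁c₂ : enorm2 (p₁ - c₂) = r₂)
    (hp₂c₂ : enorm2 (p₂ - c₂) = r₂) (hpc₂ : enorm2 (p - c₂) = r₂) : p = p₁ ∨ p = p₂ := by
  have hdist (u v : ℝ × ℝ) : dist (WithLp.toLp 2 u) (WithLp.toLp 2 v) = enorm2 (u - v) := by
    rw [dist_eq_norm, ← WithLp.toLp_sub, enorm2_eq_norm]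
  have hd : Module.finrank ℝ (WithLp 2 (ℝ × ℝ)) = 2 := by
    rw [(WithLp.linearEquiv 2 ℝ (ℝ × ℝ)).finrank_eq]; simp
  simp only [← hdist] at *
  simpa using EuclideanGeometry.eq_of_dist_eq_of_dist_eq_of_finrank_eq_two hd
    (by simpa using hc) (by simpa using hp) hp₁c₁ hp₂c₁ hpc₁ hp₁c₂ hp₂c₂ hpc₂

lemma sub_eq_two_smul_of_sub_eq_sub {V : Type*} [AddCommGroup V] [Module ℝ V] {a b c : V}
    (h : a - b = b - c) : a - c = (2 : ℝ) • (a - b) := by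
  rw [two_smul, ← sub_add_sub_cancel a b c, ← h]

lemma enorm2_polar_sub_sq (R x y : ℝ) :
    enorm2 ((R * cos x, R * sin x) - (R * cos y, R * sin y)) ^ 2 =
      2 * R ^ 2 * (1 - cos (x - y)) := by
  rw [Prod.mk_sub_mk, enorm2_sq, cos_sub]
  linear_combination R ^ 2 * (sin_sq_add_cos_sq x + sin_sq_add_cos_sq y)

lemma sin_pi_div_le_sin_nat_mul_pi_div {n r : ℕ} (hr : 1 ≤ r) (hrn : r + 1 ≤ n) :
    sin (π / n) ≤ sin (r * π / n) := by
  have hn : (0 : ℝ) < n := by norm_cast; omega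
  have hr' : (1 : ℝ) ≤ r := by exact_mod_cast hr
  have hrn' : (r : ℝ) + 1 ≤ n := by exact_mod_cast hrn
  have hπn : 0 < π / n := by positivity
  have hπ := pi_pos
  rcases le_or_gt (r * π / n) (π / 2) with h | h
  · refine sin_le_sin_of_le_of_le_pi_div_two (by linarith) h ?_
    rw [mul_div_assoc]
    exact le_mul_of_one_le_left hπn.le hr'
  · rw [← sin_pi_sub (r * π / n)]
    have : (r + 1) * π / n ≤ π := by rw [div_le_iff₀ hn]; nlinarith
    refine sin_le_sin_of_le_of_le_pi_div_two (by linarith) (by linarith) ?_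
    linarith [show (r + 1) * π / n = r * π / n + π / n by ring]

lemma sin_sq_pi_div_le_sin_sq {n : ℕ} (t : ℕ) (ht : sin (t * π / n) ≠ 0) :
    sin (π / n) ^ 2 ≤ sin (t * π / n) ^ 2 := by
  rcases Nat.eq_zero_or_pos n with rfl | hn
  · simp at ht
  have hr : sin (t * π / n) ^ 2 = sin ((t % n : ℕ) * π / n) ^ 2 := by
    have ht : (t : ℝ) = (t % n : ℕ) + n * (t / n : ℕ) := by
      exact_mod_cast (Nat.mod_add_div t n).symm
    have : (t : ℝ) * π / n = (t % n : ℕ) * π / n + (t / n : ℕ) * π := by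
      rw [ht]
      field_simp
    rw [this, sin_add_nat_mul_pi, mul_pow, ← pow_mul, pow_mul', neg_one_sq, one_pow, one_mul]
  have hrn : t % n < n := Nat.mod_lt t hn
  rcases Nat.eq_zero_or_pos (t % n) with h0 | h0
  · rw [h0, Nat.cast_zero, zero_mul, zero_div, sin_zero, zero_pow two_ne_zero] at hr
    exact absurd (pow_eq_zero_iff two_ne_zero |>.1 hr) ht
  rw [hr]
  have hle := sin_pi_div_le_sin_nat_mul_pi_div (n := n) h0 hrn
  exact pow_le_pow_left₀ (sin_nonneg_of_nonneg_of_le_pi (by positivity)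
    (div_le_self pi_pos.le (by exact_mod_cast hn))) hle 2

lemma not_even_and_cos_eq_of_cos_eq_cos_sub {n : ℕ} (hn : 2 ≤ n) (d : ℤ)
    (h : cos (2 * d * π / n) = cos (2 * (d - 1) * π / n)) :
    ¬ Even n ∧ cos (2 * d * π / n) = cos (2 * ((n / 2 : ℕ) : ℝ) * π / n) := by
  obtain ⟨m, hm | hm⟩ := cos_eq_cos_iff.1 h
  · exfalso
    have : (m * n : ℤ) = -1 := by
      field_simp at hm
      exact_mod_cast (by linarith : (m * n : ℝ) = -1)
    rcases le_or_gt 0 m with hm0 | hm0 <;> nlinarith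
  have hmn : (m * n : ℤ) = 2 * d - 1 := by
    field_simp at hm
    exact_mod_cast (by linarith : (m * n : ℝ) = 2 * d - 1)
  obtain ⟨⟨c, hc⟩, hodd⟩ := Int.odd_mul.1 ⟨d - 1, by rw [hmn]; ring⟩
  replace hodd : Odd n := Int.odd_coe_nat n |>.1 hodd
  refine ⟨Nat.not_even_iff_odd.2 hodd, cos_eq_cos_iff.2 ⟨c + 1, Or.inr ?_⟩⟩
  have hhalf : (2 * (n / 2 : ℕ) + 1 : ℝ) = n := by
    exact_mod_cast (Nat.two_mul_div_two_add_one_of_odd hodd)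
  have hmn' : (m : ℝ) * n = 2 * d - 1 := by exact_mod_cast hmn
  have hc' : (m : ℝ) = 2 * c + 1 := by exact_mod_cast hc
  push_cast
  field_simp
  linear_combination hhalf / 2 - hmn' / 2 + n / 2 * hc'

lemma Fin.ne_of_val_eq_add_one_mod {n : ℕ} (hn : 2 ≤ n) {k k' : Fin n}
    (hk' : (k' : ℕ) = (k + 1) % n) : k ≠ k' := by
  rintro rfl
  rcases Nat.lt_or_ge (k + 1) n with h | h
  · rw [Nat.mod_eq_of_lt h] at hk'
    omega
  · rw [show (k : ℕ) + 1 = n by omega, Nat.mod_self] at hk'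
    omega

section Bpt

variable {n : ℕ} {R : ℝ}

lemma enorm2_Bpt (hR : 0 ≤ R) (k : Fin n) : enorm2 (Bpt n R k) = R := by
  rw [enorm2, Bpt, mul_pow, mul_pow, ← mul_add, cos_sq_add_sin_sq, mul_one, sqrt_sq hR]

lemma Bpt_injective (hR : R ≠ 0) : Function.Injective (Bpt n R) := by
  intro j k h
  simp only [Bpt, Prod.mk.injEq, mul_right_inj' hR] at h
  obtain ⟨m, hm⟩ := Real.Angle.angle_eq_iff_two_pi_dvd_sub.1 (Real.Angle.cos_sin_inj h.1 h.2)
  have hn : (0 : ℝ) < n := by have := j.pos; positivity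
  have hjk : (j : ℤ) - k = n * m := by
    field_simp at hm
    exact_mod_cast (by linarith [hm] : (j : ℝ) - k = n * m)
  have := Int.eq_zero_of_abs_lt_dvd ⟨m, hjk⟩ (by rw [abs_lt]; omega)
  omega

lemma Bpt_of_succ {k k' : Fin n} (hk' : (k' : ℕ) = (k + 1) % n) :
    Bpt n R k' = (R * cos (2 * (k + 1) * π / n), R * sin (2 * (k + 1) * π / n)) := by
  have hn : (n : ℝ) ≠ 0 := by have := k.pos; positivity
  have : 2 * ((k : ℝ) + 1) * π / n = 2 * k' * π / n + ((k + 1) / n : ℕ) * (2 * π) := by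
    have hq : (k : ℝ) + 1 = k' + n * ((k + 1) / n : ℕ) := by
      rw [hk']; exact_mod_cast (Nat.mod_add_div (k + 1) n).symm
    rw [hq]
    field_simp
  rw [this, cos_add_nat_mul_two_pi, sin_add_nat_mul_two_pi, Bpt]

lemma eq_Rcrit_of_enorm2_sub_Bpt (hn : 2 ≤ n) (hR : 0 < R) {j k k' : Fin n}
    (hk' : (k' : ℕ) = (k + 1) % n) (h : enorm2 (Bpt n R j - Bpt n R k) = 2)
    (h' : enorm2 (Bpt n R j - Bpt n R k') = 2) : R = Rcrit n := by
  set d : ℤ := (j : ℤ) - k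
  have e : enorm2 (Bpt n R j - Bpt n R k) ^ 2 = 2 * R ^ 2 * (1 - cos (2 * d * π / n)) := by
    rw [Bpt, Bpt, enorm2_polar_sub_sq]
    push_cast [d]
    ring_nf
  have e' : enorm2 (Bpt n R j - Bpt n R k') ^ 2 =
      2 * R ^ 2 * (1 - cos (2 * (d - 1) * π / n)) := by
    rw [Bpt_of_succ hk', Bpt, enorm2_polar_sub_sq]
    push_cast [d]
    ring_nf
  rw [h] at e
  rw [h'] at e'
  obtain ⟨hodd, hcos⟩ := not_even_and_cos_eq_of_cos_eq_cos_sub hn d <| by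
    have := mul_left_cancel₀ (by positivity : 2 * R ^ 2 ≠ 0) (e.symm.trans e')
    linarith
  have hsqrt : √(2 - 2 * cos (2 * d * π / n)) = 2 / R := by
    rw [show 2 - 2 * cos (2 * d * π / n) = (2 / R) ^ 2 by
      field_simp; linear_combination (-1 / 2) * e]
    exact sqrt_sq (by positivity)
  rw [Rcrit, dmax, if_neg hodd, ← hcos, hsqrt, div_div_cancel₀ two_ne_zero]

lemma Bpt_of_succ_sub_Bpt {k k' : Fin n} (hk' : (k' : ℕ) = (k + 1) % n) :
    Bpt n R k' - Bpt n R k =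
      (2 * R * sin (π / n)) • (-sin ((2 * k + 1) * π / n), cos ((2 * k + 1) * π / n)) := by
  have hsum : (2 * ((k : ℝ) + 1) * π / n + 2 * k * π / n) / 2 = (2 * k + 1) * π / n := by ring
  have hdiff : (2 * ((k : ℝ) + 1) * π / n - 2 * k * π / n) / 2 = π / n := by ring
  rw [Bpt_of_succ hk', Bpt, Prod.mk_sub_mk, Prod.smul_mk, smul_eq_mul, smul_eq_mul, ← mul_sub,
    ← mul_sub, cos_sub_cos, sin_sub_sin, hsum, hdiff]
  ext <;> ring

lemma snd_sub_Bpt_ne_zero_of_succ (hn : 2 ≤ n) (hR0 : 0 < R) (hR2 : R < 2) {k k' : Fin n}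
    (hk' : (k' : ℕ) = (k + 1) % n) {C : ℝ × ℝ} (hC : enorm2 (C - Bpt n R k) = 2)
    (hC' : enorm2 (C - Bpt n R k') = 2) :
    (C - Bpt n R k).2 ≠ 0 ∧ (C - Bpt n R k').2 ≠ 0 := by
  set v := Bpt n R k' - Bpt n R k with hv
  -- a horizontal `C - B_k` or `C - B_{k'}` of length 2 would force `|v|² = ±4 v.1`
  have hchord : (v.1 ^ 2 + v.2 ^ 2) ^ 2 ≠ 16 * v.1 ^ 2 := by
    have hn' : (2 : ℝ) ≤ n := by exact_mod_cast hn
    have hs : 0 < sin (π / n) :=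
      sin_pos_of_pos_of_lt_pi (by positivity) (div_lt_self pi_pos (by linarith))
    have hφ : (2 * (k : ℝ) + 1) * π / n = ((2 * k + 1 : ℕ) : ℝ) * π / n := by push_cast; rfl
    rw [hv, Bpt_of_succ_sub_Bpt hk', hφ]
    set φ := ((2 * k + 1 : ℕ) : ℝ) * π / n
    set c := 2 * R * sin (π / n)
    simp only [Prod.smul_mk, smul_eq_mul]
    intro h
    have hsinφ : R ^ 2 * sin (π / n) ^ 2 = 4 * sin φ ^ 2 := by
      refine mul_left_cancel₀ (by positivity : c ^ 2 ≠ 0) ?_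
      linear_combination h / 4 - c ^ 4 * (sin φ ^ 2 + cos φ ^ 2 + 1) / 4 * sin_sq_add_cos_sq φ
    have hφ0 : sin φ ≠ 0 := by
      intro h0
      rw [h0] at hsinφ
      have : 0 < R ^ 2 * sin (π / n) ^ 2 := by positivity
      linarith
    have hle : sin (π / n) ^ 2 ≤ sin φ ^ 2 := sin_sq_pi_div_le_sin_sq _ hφ0
    have hR : R ^ 2 * sin (π / n) ^ 2 < 4 * sin (π / n) ^ 2 :=
      mul_lt_mul_of_pos_right (by nlinarith) (by positivity)
    linarith
  have hvuw : v = (C - Bpt n R k) - (C - Bpt n R k') := by rw [hv]; abel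
  set u := C - Bpt n R k
  set w := C - Bpt n R k'
  have hu := enorm2_sq u
  have hw := enorm2_sq w
  rw [hC] at hu
  rw [hC'] at hw
  have hv1 : v.1 = u.1 - w.1 := by rw [hvuw]; rfl
  have hv2 : v.2 = u.2 - w.2 := by rw [hvuw]; rfl
  constructor
  · intro h0
    have hu1 : u.1 ^ 2 = 4 := by linear_combination -hu - u.2 * h0
    have h1 : v.1 ^ 2 + v.2 ^ 2 = 2 * u.1 * v.1 := by
      rw [hv1, hv2, h0]; linear_combination -hw - hu1
    exact hchord (by rw [h1]; linear_combination 4 * v.1 ^ 2 * hu1)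
  · intro h0
    have hw1 : w.1 ^ 2 = 4 := by linear_combination -hw - w.2 * h0
    have h1 : v.1 ^ 2 + v.2 ^ 2 = -2 * w.1 * v.1 := by
      rw [hv1, hv2, h0]; linear_combination -hu - hw1
    exact hchord (by rw [h1]; linear_combination 4 * v.1 ^ 2 * hw1)

lemma linearIndependent_arm (hn : 2 ≤ n) (hR0 : 0 < R) (hR2 : R < 2) (hRne : R ≠ Rcrit n)
    {k k' j : Fin n} (hk' : (k' : ℕ) = (k + 1) % n) (hjk : j ≠ k) (hjk' : j ≠ k')
    {C J : ℝ × ℝ} (hCk : enorm2 (C - Bpt n R k) = 2) (hCk' : enorm2 (C - Bpt n R k') = 2)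
    (ha : enorm2 (C - J) = 1) (hb : enorm2 (J - Bpt n R j) = 1) :
    LinearIndependent ℝ ![C - J, J - Bpt n R j] := by
  have hinj := Bpt_injective (n := n) hR0.ne'
  refine linearIndependent_pair_of_enorm2_eq (ha.trans hb.symm) (fun h => ?_) (fun h => ?_)
  · have hCj : enorm2 (C - Bpt n R j) = 2 := by
      rw [sub_eq_two_smul_of_sub_eq_sub h, enorm2_smul, ha]
      norm_num
    have hC0 : (0 : ℝ × ℝ) ≠ C := by
      rintro rfl
      rw [enorm2_sub_comm, sub_zero, enorm2_Bpt hR0.le] at hCk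
      linarith
    have hO (l : Fin n) : enorm2 (Bpt n R l - 0) = R := by rw [sub_zero, enorm2_Bpt hR0.le]
    rw [enorm2_sub_comm] at hCk hCk' hCj
    rcases eq_or_eq_of_enorm2_sub_eq hC0 (hinj.ne (Fin.ne_of_val_eq_add_one_mod hn hk'))
      (hO k) (hO k') (hO j) hCk hCk' hCj with h | h
    exacts [hjk (hinj h), hjk' (hinj h)]
  · have hCj : C = Bpt n R j := by
      rw [← sub_eq_zero, ← sub_add_sub_cancel C J, h, neg_add_cancel]
    rw [hCj] at hCk hCk'
    exact hRne (eq_Rcrit_of_enorm2_sub_Bpt hn hR0 hk' hCk hCk')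

lemma linearIndependent_stretched_pair (hR0 : 0 < R) (hR2 : R < 2) {k k' : Fin n}
    (hkk' : k ≠ k') {C u u' : ℝ × ℝ} (hu : enorm2 u = 1) (hu' : enorm2 u' = 1)
    (hCk : C - Bpt n R k = (2 : ℝ) • u) (hCk' : C - Bpt n R k' = (2 : ℝ) • u') :
    LinearIndependent ℝ ![u, u'] := by
  refine linearIndependent_pair_of_enorm2_eq (hu.trans hu'.symm) (fun h => ?_) (fun h => ?_)
  · rw [h, ← hCk', sub_right_inj] at hCk
    exact hkk' (Bpt_injective hR0.ne' hCk)
  · have h4 : Bpt n R k' - Bpt n R k = (4 : ℝ) • u := by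
      rw [← sub_sub_sub_cancel_left (Bpt n R k) _ C, hCk, hCk', h]
      module
    have := enorm2_sub_le (Bpt n R k') (Bpt n R k)
    rw [h4, enorm2_smul, hu, enorm2_Bpt hR0.le, enorm2_Bpt hR0.le] at this
    norm_num at this
    linarith

end Bpt

lemma eq_zero_of_smul_add_mk_eq_zero {c γ : ℝ} {v : ℝ × ℝ} (hv : v.2 ≠ 0)
    (h : c • v + (γ, 0) = 0) : c = 0 ∧ γ = 0 := by
  have h1 := congrArg Prod.fst h
  have h2 := congrArg Prod.snd h
  simp only [Prod.fst_add, Prod.snd_add, Prod.smul_fst, Prod.smul_snd, smul_eq_mul,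
    Prod.fst_zero, Prod.snd_zero, add_zero] at h1 h2
  have hc : c = 0 := (mul_eq_zero.1 h2).resolve_right hv
  exact ⟨hc, by simpa [hc] using h1⟩

lemma linearIndependent_grad_epk {n : ℕ} {R : ℝ} {x : (ℝ × ℝ) × (Fin n → ℝ × ℝ)}
    {k k' : Fin n} (hkk' : k ≠ k')
    (harm : ∀ j, j ≠ k → j ≠ k' → LinearIndependent ℝ ![x.1 - x.2 j, x.2 j - Bpt n R j])
    (hpair : LinearIndependent ℝ ![x.1 - x.2 k, x.1 - x.2 k'])
    (hk : (x.2 k - Bpt n R k).2 ≠ 0) (hk' : (x.2 k' - Bpt n R k').2 ≠ 0) :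
    LinearIndependent ℝ
      (Sum.elim (Sum.elim (grad1 n x) (grad2 n R x))
        (fun t : Fin 2 => if t = 0 then epk n k else epk n k')) := by
  rw [Fintype.linearIndependent_iff]
  intro g hg
  have hC : ∑ j, (g (.inl (.inl j)) * 2) • (x.1 - x.2 j) = 0 := by
    simpa [Fintype.sum_sum_type, Prod.fst_sum, grad1, grad2, epk, Fin.sum_univ_two, smul_smul,
      apply_ite] using congrArg Prod.fst hg
  have hJ : ∀ j, (-(g (.inl (.inl j)) * 2)) • (x.1 - x.2 j)
      + (g (.inl (.inr j)) * 2) • (x.2 j - Bpt n R j)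
      + ((if j = k then (g (.inr 0), 0) else 0) + (if j = k' then (g (.inr 1), 0) else 0)) = 0 := by
    intro j
    have h := congrArg (fun z : (ℝ × ℝ) × (Fin n → ℝ × ℝ) => z.2 j) hg
    simp only [Fintype.sum_sum_type, Fin.sum_univ_two, Prod.snd_add, Finset.sum_apply,
      Prod.snd_sum, Prod.smul_snd, Pi.add_apply, Pi.smul_apply, Sum.elim_inl, Sum.elim_inr,
      grad1, grad2, epk, smul_ite, smul_zero, Finset.sum_ite_eq, Finset.mem_univ, if_true,
      Prod.snd_zero, Pi.zero_apply] at h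
    simpa [smul_smul] using h
  have hother : ∀ j, j ≠ k → j ≠ k' → g (.inl (.inl j)) = 0 ∧ g (.inl (.inr j)) = 0 := by
    intro j hjk hjk'
    have h := hJ j
    rw [if_neg hjk, if_neg hjk', add_zero, add_zero] at h
    have := LinearIndependent.pair_iff.1 (harm j hjk hjk') _ _ h
    constructor <;> linarith
  have hαk : g (.inl (.inl k)) = 0 ∧ g (.inl (.inl k')) = 0 := by
    rw [Fintype.sum_eq_add k k' hkk' fun j hj => by
      rw [(hother j hj.1 hj.2).1, zero_mul, zero_smul]] at hC
    have := LinearIndependent.pair_iff.1 hpair _ _ hC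
    constructor <;> linarith
  have hβγk : g (.inl (.inr k)) = 0 ∧ g (.inr 0) = 0 := by
    have h := hJ k
    rw [if_pos rfl, if_neg hkk', add_zero, hαk.1, zero_mul, neg_zero, zero_smul, zero_add] at h
    have := eq_zero_of_smul_add_mk_eq_zero hk h
    exact ⟨by linarith, this.2⟩
  have hβγk' : g (.inl (.inr k')) = 0 ∧ g (.inr 1) = 0 := by
    have h := hJ k'
    rw [if_neg hkk'.symm, if_pos rfl, zero_add, hαk.2, zero_mul, neg_zero, zero_smul,
      zero_add] at h
    have := eq_zero_of_smul_add_mk_eq_zero hk' h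
    exact ⟨by linarith, this.2⟩
  rintro ((j | j) | t)
  · by_cases hj : j = k
    · exact hj ▸ hαk.1
    by_cases hj' : j = k'
    · exact hj' ▸ hαk.2
    exact (hother j hj hj').1
  · by_cases hj : j = k
    · exact hj ▸ hβγk.1
    by_cases hj' : j = k'
    · exact hj' ▸ hβγk'.1
    exact (hother j hj hj').2
  · fin_cases t
    exacts [hβγk.2, hβγk'.2]

/-- Suppose `0 < R < 2`, `R ≠ R_n`, and `x ∈ M_n(R)` has two adjacent arms
stretched out (`a_k = b_k` and `a_{k+1} = b_{k+1}`). Then the `2n+2` vectors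
`∇f_1(x), …, ∇f_{2n}(x)` together with the standard basis vectors for the
coordinates `p_k`, `p_{k+1}` are linearly independent (so `(p_k, p_{k+1})` serve
as local coordinates on `M_n(R)` near `x`). -/
theorem stmt13 (n : ℕ) (hn : 2 ≤ n) (R : ℝ) (hR0 : 0 < R) (hR2 : R < 2)
    (hRne : R ≠ Rcrit n)
    (x : (ℝ × ℝ) × (Fin n → ℝ × ℝ)) (hx : x ∈ MSpace n R)
    (k k' : Fin n) (hk' : (k' : ℕ) = ((k : ℕ) + 1) % n)
    (h1 : x.1 - x.2 k = x.2 k - Bpt n R k)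
    (h2 : x.1 - x.2 k' = x.2 k' - Bpt n R k') :
    LinearIndependent ℝ
      (Sum.elim (Sum.elim (grad1 n x) (grad2 n R x))
        (fun t : Fin 2 => if t = 0 then epk n k else epk n k') :
        (Fin n ⊕ Fin n) ⊕ Fin 2 → (ℝ × ℝ) × (Fin n → ℝ × ℝ)) := by
  have hkk' := Fin.ne_of_val_eq_add_one_mod hn hk'
  have hCk := sub_eq_two_smul_of_sub_eq_sub h1
  have hCk' := sub_eq_two_smul_of_sub_eq_sub h2
  have hdist (l : Fin n) (h : x.1 - Bpt n R l = (2 : ℝ) • (x.1 - x.2 l)) :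
      enorm2 (x.1 - Bpt n R l) = 2 := by
    rw [h, enorm2_smul, (hx l).1]
    norm_num
  obtain ⟨hk2, hk'2⟩ :=
    snd_sub_Bpt_ne_zero_of_succ hn hR0 hR2 hk' (hdist k hCk) (hdist k' hCk')
  rw [hCk, Prod.smul_snd, smul_eq_mul, h1] at hk2
  rw [hCk', Prod.smul_snd, smul_eq_mul, h2] at hk'2
  refine linearIndependent_grad_epk hkk' (fun j hjk hjk' => ?_)
    (linearIndependent_stretched_pair hR0 hR2 hkk' (hx k).1 (hx k').1 hCk hCk')
    (right_ne_zero_of_mul hk2) (right_ne_zero_of_mul hk'2)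
  exact linearIndependent_arm hn hR0 hR2 hRne hk' hjk hjk' (hdist k hCk) (hdist k' hCk')
    (hx j).1 (hx j).2
end

section
/- Suppose 0 < R < 2 and R ≠ R_n. For a configuration x ∈ M_n(R) whose k-th arm is bended (i.e. a_k ≠ b_k and a_k ≠ −b_k), say the k-th arm has index ε_k = +1 if det(b_k, a_k) > 0 and ε_k = −1 if det(b_k, a_k) < 0, where det((u₁,u₂),(v₁,v₂)) = u₁v₂ − u₂v₁. For each sign vector ε ∈ {+1, −1}^n, let D_ε = {x ∈ M_n(R) : every arm of x is bended and has index ε_k for all k}. Then the projection x = (C, J_1, …, J_n) ↦ C restricted to D_ε is a homeomorphism from D_ε onto the open body domain {C ∈ ℝ² : 0 < |C − B_k| < 2 for all k}. -/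
noncomputable def jointPt (B : ℝ × ℝ) (e : ℝ) (C : ℝ × ℝ) : ℝ × ℝ :=
  ((C.1 + B.1) / 2 + e * Real.sqrt (1 / ((C.1 - B.1)^2 + (C.2 - B.2)^2) - 1/4) * (C.2 - B.2),
   (C.2 + B.2) / 2 - e * Real.sqrt (1 / ((C.1 - B.1)^2 + (C.2 - B.2)^2) - 1/4) * (C.1 - B.1))

lemma uniq_alg (e a1 a2 b1 b2 : ℝ) (he2 : e ^ 2 = 1)
    (ha : a1 ^ 2 + a2 ^ 2 = 1) (hb : b1 ^ 2 + b2 ^ 2 = 1)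
    (hdet : 0 < e * (b1 * a2 - b2 * a1)) :
    0 < ((a1 + b1) ^ 2 + (a2 + b2) ^ 2) ∧ ((a1 + b1) ^ 2 + (a2 + b2) ^ 2) < 4 ∧
    b1 - a1 = 2 * e * Real.sqrt (1 / ((a1 + b1) ^ 2 + (a2 + b2) ^ 2) - 1 / 4) * (a2 + b2) ∧
    b2 - a2 = -(2 * e * Real.sqrt (1 / ((a1 + b1) ^ 2 + (a2 + b2) ^ 2) - 1 / 4) * (a1 + b1)) := by
  have heM : 0 < e * ((b1 - a1) * (a2 + b2) - (b2 - a2) * (a1 + b1)) := by nlinarith [hdet]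
  have hM2 : ((b1 - a1) * (a2 + b2) - (b2 - a2) * (a1 + b1)) ^ 2 = (4 - ((a1 + b1) ^ 2 + (a2 + b2) ^ 2)) * ((a1 + b1) ^ 2 + (a2 + b2) ^ 2) := by
    linear_combination ((b1^2 - a1^2 + b2^2 - a2^2) + 2*((a1 + b1) ^ 2 + (a2 + b2) ^ 2)) * ha +
      (2*((a1 + b1) ^ 2 + (a2 + b2) ^ 2) - (b1^2 - a1^2 + b2^2 - a2^2)) * hb
  have hM2pos : 0 < ((b1 - a1) * (a2 + b2) - (b2 - a2) * (a1 + b1)) ^ 2 := by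
    nlinarith [heM, he2, sq_nonneg (e * ((b1 - a1) * (a2 + b2) - (b2 - a2) * (a1 + b1)))]
  have hqnn : (0:ℝ) ≤ ((a1 + b1) ^ 2 + (a2 + b2) ^ 2) := by positivity
  have hq0 : 0 < ((a1 + b1) ^ 2 + (a2 + b2) ^ 2) := by nlinarith
  have hq4 : ((a1 + b1) ^ 2 + (a2 + b2) ^ 2) < 4 := by nlinarith
  have harg : 1 / ((a1 + b1) ^ 2 + (a2 + b2) ^ 2) - 1 / 4 = (e * ((b1 - a1) * (a2 + b2) - (b2 - a2) * (a1 + b1)) / 2 / ((a1 + b1) ^ 2 + (a2 + b2) ^ 2)) ^ 2 := by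
    rw [div_pow, div_pow, mul_pow, he2, one_mul, hM2]
    field_simp
    ring
  have hss : Real.sqrt (1 / ((a1 + b1) ^ 2 + (a2 + b2) ^ 2) - 1 / 4) = e * ((b1 - a1) * (a2 + b2) - (b2 - a2) * (a1 + b1)) / 2 / ((a1 + b1) ^ 2 + (a2 + b2) ^ 2) := by
    rw [harg]
    exact Real.sqrt_sq (div_nonneg (div_nonneg heM.le (by norm_num)) hq0.le)
  refine ⟨hq0, hq4, ?_, ?_⟩
  · rw [hss, show 2 * e * (e * ((b1 - a1) * (a2 + b2) - (b2 - a2) * (a1 + b1)) / 2 / ((a1 + b1) ^ 2 + (a2 + b2) ^ 2)) * (a2 + b2) =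
        e * e * ((b1 - a1) * (a2 + b2) - (b2 - a2) * (a1 + b1)) * (a2 + b2) / ((a1 + b1) ^ 2 + (a2 + b2) ^ 2) by ring,
      eq_div_iff hq0.ne']
    linear_combination (a1 + b1) * hb - (a1 + b1) * ha -
      (((b1 - a1) * (a2 + b2) - (b2 - a2) * (a1 + b1)) * (a2 + b2)) * he2
  · rw [hss, show -(2 * e * (e * ((b1 - a1) * (a2 + b2) - (b2 - a2) * (a1 + b1)) / 2 / ((a1 + b1) ^ 2 + (a2 + b2) ^ 2)) * (a1 + b1)) =
        -(e * e * ((b1 - a1) * (a2 + b2) - (b2 - a2) * (a1 + b1)) * (a1 + b1)) / ((a1 + b1) ^ 2 + (a2 + b2) ^ 2) by ring,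
      eq_div_iff hq0.ne']
    linear_combination (a2 + b2) * hb - (a2 + b2) * ha +
      (((b1 - a1) * (a2 + b2) - (b2 - a2) * (a1 + b1)) * (a1 + b1)) * he2

lemma jointPt_spec (B : ℝ × ℝ) (e : ℝ) (he : e = 1 ∨ e = -1) (C : ℝ × ℝ)
    (h0 : 0 < enorm2 (C - B)) (h2 : enorm2 (C - B) < 2) :
    enorm2 (C - jointPt B e C) = 1 ∧ enorm2 (jointPt B e C - B) = 1 ∧
    0 < e * ((jointPt B e C - B).1 * (C - jointPt B e C).2 -
             (jointPt B e C - B).2 * (C - jointPt B e C).1) := by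
  have he2 : e ^ 2 = 1 := by rcases he with h | h <;> rw [h] <;> norm_num
  set u1 := C.1 - B.1 with hu1
  set u2 := C.2 - B.2 with hu2
  set q := u1 ^ 2 + u2 ^ 2 with hq
  have hq0 : 0 < q := by
    have := Real.sqrt_pos.mp (by simpa [enorm2, hu1, hu2, hq] using h0)
    simpa [hq] using this
  have hq4 : q < 4 := by
    have h := (Real.sqrt_lt' (y := 2) (by norm_num)).mp
      (by simpa [enorm2, hu1, hu2, hq] using h2)
    rw [hq, hu1, hu2]; nlinarith [h]
  set s := Real.sqrt (1 / q - 1 / 4) with hs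
  have hsub : (0:ℝ) ≤ 1 / q - 1 / 4 := by
    rw [sub_nonneg]
    exact one_div_le_one_div_of_le hq0 (by linarith)
  have hs2 : s ^ 2 = 1 / q - 1 / 4 := Real.sq_sqrt hsub
  have hs0 : 0 < s := Real.sqrt_pos.mpr (by
    rw [sub_pos]
    exact one_div_lt_one_div_of_lt hq0 (by linarith))
  have key : s ^ 2 * q = 1 - q / 4 := by rw [hs2]; field_simp
  have hJ1 : (jointPt B e C).1 = (C.1 + B.1) / 2 + e * s * u2 := rfl
  have hJ2 : (jointPt B e C).2 = (C.2 + B.2) / 2 - e * s * u1 := rfl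
  have ha1 : (C - jointPt B e C).1 = u1 / 2 - e * s * u2 := by
    show C.1 - (jointPt B e C).1 = _; rw [hJ1]; ring
  have ha2 : (C - jointPt B e C).2 = u2 / 2 + e * s * u1 := by
    show C.2 - (jointPt B e C).2 = _; rw [hJ2]; ring
  have hb1 : (jointPt B e C - B).1 = u1 / 2 + e * s * u2 := by
    show (jointPt B e C).1 - B.1 = _; rw [hJ1]; ring
  have hb2 : (jointPt B e C - B).2 = u2 / 2 - e * s * u1 := by
    show (jointPt B e C).2 - B.2 = _; rw [hJ2]; ring
  refine ⟨?_, ?_, ?_⟩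
  · show Real.sqrt ((C - jointPt B e C).1 ^ 2 + (C - jointPt B e C).2 ^ 2) = 1
    rw [ha1, ha2, show (u1 / 2 - e * s * u2) ^ 2 + (u2 / 2 + e * s * u1) ^ 2 = 1 by
      linear_combination (s ^ 2 * (u1^2 + u2^2)) * he2 + key, Real.sqrt_one]
  · show Real.sqrt ((jointPt B e C - B).1 ^ 2 + (jointPt B e C - B).2 ^ 2) = 1
    rw [hb1, hb2, show (u1 / 2 + e * s * u2) ^ 2 + (u2 / 2 - e * s * u1) ^ 2 = 1 by
      linear_combination (s ^ 2 * (u1^2 + u2^2)) * he2 + key, Real.sqrt_one]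
  · rw [ha1, ha2, hb1, hb2]
    have : e * ((u1 / 2 + e * s * u2) * (u2 / 2 + e * s * u1) -
        (u2 / 2 - e * s * u1) * (u1 / 2 - e * s * u2)) = s * q := by
      linear_combination (s * (u1^2+u2^2)) * he2
    rw [this]
    exact mul_pos hs0 hq0

lemma jointPt_uniq (B : ℝ × ℝ) (e : ℝ) (he : e = 1 ∨ e = -1) (C J : ℝ × ℝ)
    (h1 : enorm2 (C - J) = 1) (h2 : enorm2 (J - B) = 1)
    (hdet : 0 < e * ((J - B).1 * (C - J).2 - (J - B).2 * (C - J).1)) :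
    J = jointPt B e C ∧ 0 < enorm2 (C - B) ∧ enorm2 (C - B) < 2 := by
  have he2 : e ^ 2 = 1 := by rcases he with h | h <;> rw [h] <;> norm_num
  have ha : (C.1 - J.1) ^ 2 + (C.2 - J.2) ^ 2 = 1 := by
    have h := h1; unfold enorm2 at h
    exact Real.sqrt_eq_one.mp h
  have hb : (J.1 - B.1) ^ 2 + (J.2 - B.2) ^ 2 = 1 := by
    have h := h2; unfold enorm2 at h
    exact Real.sqrt_eq_one.mp h
  have hdet' : 0 < e * ((J.1 - B.1) * (C.2 - J.2) - (J.2 - B.2) * (C.1 - J.1)) := hdet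
  obtain ⟨hq0, hq4, hc1, hc2⟩ := uniq_alg e (C.1 - J.1) (C.2 - J.2)
    (J.1 - B.1) (J.2 - B.2) he2 ha hb hdet'
  have hA : C.1 - J.1 + (J.1 - B.1) = C.1 - B.1 := by ring
  have hB : C.2 - J.2 + (J.2 - B.2) = C.2 - B.2 := by ring
  rw [hA, hB] at hq0 hq4 hc1 hc2
  refine ⟨?_, ?_, ?_⟩
  · apply Prod.ext
    · show J.1 = (C.1 + B.1) / 2 +
        e * Real.sqrt (1 / ((C.1 - B.1)^2 + (C.2 - B.2)^2) - 1/4) * (C.2 - B.2)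
      linarith [hc1]
    · show J.2 = (C.2 + B.2) / 2 -
        e * Real.sqrt (1 / ((C.1 - B.1)^2 + (C.2 - B.2)^2) - 1/4) * (C.1 - B.1)
      linarith [hc2]
  · show 0 < Real.sqrt ((C - B).1 ^ 2 + (C - B).2 ^ 2)
    exact Real.sqrt_pos.mpr hq0
  · show Real.sqrt ((C - B).1 ^ 2 + (C - B).2 ^ 2) < 2
    exact (Real.sqrt_lt' (by norm_num)).mpr (by
      show (C.1 - B.1) ^ 2 + (C.2 - B.2) ^ 2 < 2 ^ 2
      nlinarith [hq4])

lemma continuous_jointPt {α : Type*} [TopologicalSpace α] (B : ℝ × ℝ) (e : ℝ)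
    (f : α → ℝ × ℝ) (hf : Continuous f)
    (h0 : ∀ x, ((f x).1 - B.1) ^ 2 + ((f x).2 - B.2) ^ 2 ≠ 0) :
    Continuous fun x => jointPt B e (f x) := by
  have hq : Continuous fun x => ((f x).1 - B.1) ^ 2 + ((f x).2 - B.2) ^ 2 := by fun_prop
  have hs : Continuous fun x =>
      Real.sqrt (1 / (((f x).1 - B.1) ^ 2 + ((f x).2 - B.2) ^ 2) - 1 / 4) :=
    Continuous.sqrt ((continuous_const.div hq h0).sub continuous_const)
  unfold jointPt
  exact Continuous.prodMk
    (((hf.fst.add continuous_const).div_const 2).add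
      ((continuous_const.mul hs).mul (hf.snd.sub continuous_const)))
    (((hf.snd.add continuous_const).div_const 2).sub
      ((continuous_const.mul hs).mul (hf.fst.sub continuous_const)))

/-- Suppose `0 < R < 2`, `R ≠ R_n`. For a sign vector `ε ∈ {+1,−1}^n`, let `D_ε` be
the set of configurations all of whose arms are bended with index `ε_k`, i.e.
`ε_k · det(b_k, a_k) > 0` for all `k`. Then the body projection `x ↦ C` restricts
to a homeomorphism from `D_ε` onto the open body domain
`{C : 0 < |C − B_k| < 2 for all k}`. -/
theorem stmt14 (n : ℕ) (hn : 2 ≤ n) (R : ℝ) (hR0 : 0 < R) (hR2 : R < 2)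
    (hRne : R ≠ Rcrit n)
    (ε : Fin n → ℝ) (hε : ∀ k, ε k = 1 ∨ ε k = -1) :
    ∃ e : {x : (ℝ × ℝ) × (Fin n → ℝ × ℝ) //
        x ∈ MSpace n R ∧ ∀ k : Fin n,
          0 < ε k * ((x.2 k - Bpt n R k).1 * (x.1 - x.2 k).2 -
                     (x.2 k - Bpt n R k).2 * (x.1 - x.2 k).1)} ≃ₜ
        {C : ℝ × ℝ // ∀ k : Fin n,
          0 < enorm2 (C - Bpt n R k) ∧ enorm2 (C - Bpt n R k) < 2},
      ∀ x, (e x : ℝ × ℝ) = x.val.1 := by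
  refine ⟨{
    toFun := fun x => ⟨x.val.1, fun k =>
      (jointPt_uniq (Bpt n R k) (ε k) (hε k) x.val.1 (x.val.2 k)
        (x.prop.1 k).1 (x.prop.1 k).2 (x.prop.2 k)).2⟩,
    invFun := fun C => ⟨(C.val, fun k => jointPt (Bpt n R k) (ε k) C.val),
      fun k => ⟨(jointPt_spec (Bpt n R k) (ε k) (hε k) C.val (C.prop k).1 (C.prop k).2).1,
        (jointPt_spec (Bpt n R k) (ε k) (hε k) C.val (C.prop k).1 (C.prop k).2).2.1⟩,
      fun k => (jointPt_spec (Bpt n R k) (ε k) (hε k) C.val (C.prop k).1 (C.prop k).2).2.2⟩,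
    left_inv := ?_, right_inv := ?_,
    continuous_toFun := ?_, continuous_invFun := ?_ }, fun x => rfl⟩
  · intro x
    apply Subtype.ext
    apply Prod.ext
    · rfl
    · funext k
      exact ((jointPt_uniq (Bpt n R k) (ε k) (hε k) x.val.1 (x.val.2 k)
        (x.prop.1 k).1 (x.prop.1 k).2 (x.prop.2 k)).1).symm
  · intro C
    exact Subtype.ext rfl
  · exact (continuous_fst.comp continuous_subtype_val).subtype_mk _
  · refine Continuous.subtype_mk (Continuous.prodMk continuous_subtype_val
      (continuous_pi fun k => continuous_jointPt (Bpt n R k) (ε k)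
        Subtype.val continuous_subtype_val fun C => ?_)) _
    exact (Real.sqrt_pos.mp (C.prop k).1).ne'
end

section
/- For every n ≥ 2 and R ≥ 0, the image of the configuration space M_n(R) under the projection (C, J_1, …, J_n) ↦ C is exactly the curved n-gon D = {C ∈ ℝ² : |C − B_k| ≤ 2 for all k = 1,…,n}; that is, a point C ∈ ℝ² is the body of some configuration in M_n(R) if and only if |C − B_k| ≤ 2 for every k. -/
/-!
The arms do not interact: a body `C` carries an arm ending at `B_k` exactly when the two unit
circles about `C` and `B_k` meet, i.e. when `|C - B_k| ≤ 2`. Identifying `ℝ²` with `ℂ`, a common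
point of the circles of radius `r` about `0` and `v` is `v / 2 * (1 + s i)`, with `s ≥ 0` chosen
so that `|1 + s i| = 2r / |v|`.
-/

open Complex

lemma Complex.exists_norm_eq_and_norm_sub_eq_of_norm_le {v : ℂ} {r : ℝ} (hv : ‖v‖ ≤ 2 * r) :
    ∃ j : ℂ, ‖j‖ = r ∧ ‖v - j‖ = r := by
  rcases eq_or_ne v 0 with rfl | hv0
  · have hr : 0 ≤ r := by simpa using hv
    exact ⟨r, by simp [abs_of_nonneg hr]⟩
  have hvpos : 0 < ‖v‖ := norm_pos_iff.mpr hv0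
  set s := √((2 * r / ‖v‖) ^ 2 - 1)
  have hs : √(1 + s ^ 2) = 2 * r / ‖v‖ := by
    have h1 : 1 ≤ 2 * r / ‖v‖ := by rwa [one_le_div hvpos]
    rw [Real.sq_sqrt (by nlinarith), add_sub_cancel, Real.sqrt_sq (by linarith)]
  have norm_eq : ∀ t : ℝ, t ^ 2 = s ^ 2 → ‖v / 2 * (1 + t * I)‖ = r := by
    intro t ht
    rw [norm_mul, norm_div, Complex.norm_two, ← ofReal_one, norm_add_mul_I, one_pow, ht, hs]
    field_simp
  refine ⟨v / 2 * (1 + s * I), norm_eq s rfl, ?_⟩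
  rw [show v - v / 2 * (1 + s * I) = v / 2 * (1 + ((-s : ℝ) : ℂ) * I) by push_cast; ring]
  exact norm_eq (-s) (neg_sq s)

lemma enorm2_sub_eq_dist (a b : ℝ × ℝ) :
    enorm2 (a - b) = dist (equivRealProd.symm a) (equivRealProd.symm b) := by
  have hsub : equivRealProd.symm a - equivRealProd.symm b = equivRealProd.symm (a - b) :=
    (map_sub equivRealProdAddHom.symm a b).symm
  rw [dist_eq_norm, hsub, equivRealProd_symm_apply, norm_add_mul_I, enorm2]

lemma enorm2_sub_le_add (a b c : ℝ × ℝ) : enorm2 (a - c) ≤ enorm2 (a - b) + enorm2 (b - c) := by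
  simp only [enorm2_sub_eq_dist]
  exact dist_triangle _ _ _

lemma exists_enorm2_sub_eq_and_enorm2_sub_eq {a b : ℝ × ℝ} {r : ℝ} (h : enorm2 (a - b) ≤ 2 * r) :
    ∃ j : ℝ × ℝ, enorm2 (a - j) = r ∧ enorm2 (j - b) = r := by
  rw [enorm2_sub_eq_dist, dist_eq_norm] at h
  obtain ⟨z, hz, hvz⟩ := Complex.exists_norm_eq_and_norm_sub_eq_of_norm_le h
  refine ⟨equivRealProd (equivRealProd.symm a - z), ?_, ?_⟩
  · rw [enorm2_sub_eq_dist, Equiv.symm_apply_apply, dist_eq_norm, sub_sub_cancel, hz]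
  · rw [enorm2_sub_eq_dist, Equiv.symm_apply_apply, dist_eq_norm, sub_right_comm, hvz]

theorem stmt16_general (n : ℕ) (R : ℝ) :
    (fun x : (ℝ × ℝ) × (Fin n → ℝ × ℝ) => x.1) '' MSpace n R =
      {C : ℝ × ℝ | ∀ k : Fin n, enorm2 (C - Bpt n R k) ≤ 2} := by
  ext C
  constructor
  · rintro ⟨⟨C, J⟩, hJ, rfl⟩ k
    calc enorm2 (C - Bpt n R k) ≤ enorm2 (C - J k) + enorm2 (J k - Bpt n R k) :=
          enorm2_sub_le_add _ _ _
      _ = 2 := by rw [(hJ k).1, (hJ k).2]; norm_num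
  · intro hC
    choose J hJ using fun k ↦
      exists_enorm2_sub_eq_and_enorm2_sub_eq (r := 1) ((hC k).trans_eq (mul_one 2).symm)
    exact ⟨(C, J), hJ, rfl⟩

/-- For every `n ≥ 2` and `R ≥ 0`, the image of `M_n(R)` under the body projection
`(C, J_1, …, J_n) ↦ C` is exactly the curved n-gon
`D = {C : |C − B_k| ≤ 2 for all k}`. -/
theorem stmt16 (n : ℕ) (hn : 2 ≤ n) (R : ℝ) (hR : 0 ≤ R) :
    (fun x : (ℝ × ℝ) × (Fin n → ℝ × ℝ) => x.1) '' MSpace n R =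
      {C : ℝ × ℝ | ∀ k : Fin n, enorm2 (C - Bpt n R k) ≤ 2} :=
  stmt16_general n R
end

section
/- Suppose 0 < R < R_n. Then the set {x = (C, J_1, …, J_n) ∈ M_n(R) : there exists k with C = B_k and the first coordinate of J_k − B_k equal to 0} (configurations with a folded arm parallel to the y-axis) is finite and has exactly n·2^n elements. -/
open Real
lemma key1 (p1 p2 q1 q2 t c : ℝ) (hc : c^2 = 1)
    (ht : t^2 * (4*((q1-p1)^2+(q2-p2)^2)) = 4 - ((q1-p1)^2+(q2-p2)^2)) :
    (((p1+q1)/2 + c*t*(-(q2-p2)) - p1)^2 + (((p2+q2)/2 + c*t*(q1-p1)) - p2)^2 = 1) ∧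
    (((p1+q1)/2 + c*t*(-(q2-p2)) - q1)^2 + (((p2+q2)/2 + c*t*(q1-p1)) - q2)^2 = 1) := by
  constructor <;>
    linear_combination (1/4)*ht + (t^2*((q1-p1)^2+(q2-p2)^2))*hc

lemma key2 (p1 p2 q1 q2 s t x y : ℝ)
    (hs : s = (q1-p1)^2+(q2-p2)^2) (hs0 : 0 < s)
    (ht : t^2 * (4*s) = 4 - s)
    (e1 : (x-p1)^2+(y-p2)^2 = 1) (e2 : (x-q1)^2+(y-q2)^2 = 1) :
    (x = (p1+q1)/2 + t*(-(q2-p2)) ∧ y = (p2+q2)/2 + t*(q1-p1)) ∨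
    (x = (p1+q1)/2 + (-t)*(-(q2-p2)) ∧ y = (p2+q2)/2 + (-t)*(q1-p1)) := by
  have hsne : s ≠ 0 := ne_of_gt hs0
  have h1 : (x - (p1+q1)/2)*(q1-p1) + (y - (p2+q2)/2)*(q2-p2) = 0 := by
    linear_combination (e1 - e2)/2
  set w : ℝ := (x - (p1+q1)/2)*(-(q2-p2)) + (y - (p2+q2)/2)*(q1-p1) with hwdef
  have hx : s*(x - (p1+q1)/2) = w*(-(q2-p2)) := by
    rw [hwdef, hs]; linear_combination (q1-p1)*h1
  have hy : s*(y - (p2+q2)/2) = w*(q1-p1) := by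
    rw [hwdef, hs]; linear_combination (q2-p2)*h1
  have hw2 : w^2 * s = s^2 * (1 - s/4) := by
    have h2 : (s*(x - (p1+q1)/2))^2 + (s*(y - (p2+q2)/2))^2 = w^2 * s := by
      rw [hx, hy, hs]; ring
    have hnorm : (x - (p1+q1)/2)^2 + (y - (p2+q2)/2)^2 = 1 - s/4 := by
      rw [hs]; linear_combination (e1 + e2)/2
    linear_combination s^2 * hnorm - h2
  have hw2' : w^2 = t^2 * s^2 :=
    mul_left_cancel₀ hsne (by linear_combination hw2 - (s^2/4)*ht)
  have hl2 : (w/s)^2 = t^2 := by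
    rw [div_pow, hw2']; field_simp
  have hxl : (w/s)*(-(q2-p2)) = x - (p1+q1)/2 := by
    rw [div_mul_eq_mul_div, ← hx, mul_div_cancel_left₀ _ hsne]
  have hyl : (w/s)*(q1-p1) = y - (p2+q2)/2 := by
    rw [div_mul_eq_mul_div, ← hy, mul_div_cancel_left₀ _ hsne]
  have hfac : (w/s - t)*(w/s + t) = 0 := by linear_combination hl2
  rcases mul_eq_zero.mp hfac with h | h
  · left
    have hlt : w/s = t := by linarith
    rw [hlt] at hxl hyl
    constructor <;> linarith
  · right
    have hlt : w/s = -t := by linarith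
    rw [hlt] at hxl hyl
    constructor <;> linarith

/-- the two intersection points of unit circles centered at p and q -/
noncomputable def ipt (p q : ℝ × ℝ) (b : Bool) : ℝ × ℝ :=
  ((p.1 + q.1)/2 + (if b then 1 else -1) *
      Real.sqrt ((4 - ((q.1-p.1)^2+(q.2-p.2)^2)) / (4 * ((q.1-p.1)^2+(q.2-p.2)^2))) * (-(q.2 - p.2)),
   (p.2 + q.2)/2 + (if b then 1 else -1) *
      Real.sqrt ((4 - ((q.1-p.1)^2+(q.2-p.2)^2)) / (4 * ((q.1-p.1)^2+(q.2-p.2)^2))) * (q.1 - p.1))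

lemma enorm2_eq_one_iff (v : ℝ × ℝ) : enorm2 v = 1 ↔ v.1^2 + v.2^2 = 1 := by
  unfold enorm2; exact Real.sqrt_eq_one

lemma tval_prop (p q : ℝ × ℝ) (hs0 : 0 < (q.1-p.1)^2+(q.2-p.2)^2)
    (hs4 : (q.1-p.1)^2+(q.2-p.2)^2 < 4) :
    0 < Real.sqrt ((4 - ((q.1-p.1)^2+(q.2-p.2)^2)) / (4 * ((q.1-p.1)^2+(q.2-p.2)^2))) ∧
    (Real.sqrt ((4 - ((q.1-p.1)^2+(q.2-p.2)^2)) / (4 * ((q.1-p.1)^2+(q.2-p.2)^2))))^2 *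
      (4*((q.1-p.1)^2+(q.2-p.2)^2)) = 4 - ((q.1-p.1)^2+(q.2-p.2)^2) := by
  set s := (q.1-p.1)^2+(q.2-p.2)^2 with hs
  have harg : 0 < (4 - s) / (4 * s) := by
    apply div_pos (by linarith) (by linarith)
  have h1 : 0 < Real.sqrt ((4 - s)/(4*s)) := Real.sqrt_pos.mpr harg
  have h2 : (Real.sqrt ((4 - s)/(4*s)))^2 = (4-s)/(4*s) := Real.sq_sqrt harg.le
  refine ⟨h1, ?_⟩
  rw [h2]; field_simp

lemma circle_set (p q : ℝ × ℝ) (hs0 : 0 < (q.1-p.1)^2+(q.2-p.2)^2)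
    (hs4 : (q.1-p.1)^2+(q.2-p.2)^2 < 4) :
    {J : ℝ × ℝ | enorm2 (p - J) = 1 ∧ enorm2 (J - q) = 1} =
      {ipt p q true, ipt p q false} := by
  obtain ⟨htpos, ht⟩ := tval_prop p q hs0 hs4
  set t := Real.sqrt ((4 - ((q.1-p.1)^2+(q.2-p.2)^2)) / (4 * ((q.1-p.1)^2+(q.2-p.2)^2))) with htdef
  ext J
  simp only [Set.mem_setOf_eq, Set.mem_insert_iff, Set.mem_singleton_iff,
    enorm2_eq_one_iff]
  constructor
  · rintro ⟨h1, h2⟩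
    have e1 : (J.1 - p.1)^2 + (J.2 - p.2)^2 = 1 := by
      simp only [Prod.fst_sub, Prod.snd_sub] at h1; linear_combination h1
    have e2 : (J.1 - q.1)^2 + (J.2 - q.2)^2 = 1 := by
      simp only [Prod.fst_sub, Prod.snd_sub] at h2; linear_combination h2
    rcases key2 p.1 p.2 q.1 q.2 _ t J.1 J.2 rfl hs0 ht e1 e2 with ⟨hx, hy⟩ | ⟨hx, hy⟩
    · left
      apply Prod.ext
      · simp only [ipt, ← htdef]; norm_num; linear_combination hx
      · simp only [ipt, ← htdef]; norm_num; linear_combination hy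
    · right
      apply Prod.ext
      · simp only [ipt, ← htdef]; norm_num; linear_combination hx
      · simp only [ipt, ← htdef]; norm_num; linear_combination hy
  · intro h
    have hc : ∀ b : Bool, ((ipt p q b).1 - p.1)^2 + ((ipt p q b).2 - p.2)^2 = 1 ∧
        ((ipt p q b).1 - q.1)^2 + ((ipt p q b).2 - q.2)^2 = 1 := by
      intro b
      have hc2 : ((if b then (1:ℝ) else -1))^2 = 1 := by cases b <;> norm_num
      exact key1 p.1 p.2 q.1 q.2 t _ hc2 ht
    rcases h with h | h <;> rw [h] <;>
    · obtain ⟨c1, c2⟩ := hc _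
      constructor <;> simp only [Prod.fst_sub, Prod.snd_sub]
      · linear_combination c1
      · linear_combination c2

lemma ipt_ne (p q : ℝ × ℝ) (hs0 : 0 < (q.1-p.1)^2+(q.2-p.2)^2)
    (hs4 : (q.1-p.1)^2+(q.2-p.2)^2 < 4) : ipt p q true ≠ ipt p q false := by
  obtain ⟨htpos, ht⟩ := tval_prop p q hs0 hs4
  set t := Real.sqrt ((4 - ((q.1-p.1)^2+(q.2-p.2)^2)) / (4 * ((q.1-p.1)^2+(q.2-p.2)^2))) with htdef
  intro h
  have h1 := congrArg Prod.fst h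
  have h2 := congrArg Prod.snd h
  simp only [ipt, ← htdef] at h1 h2
  norm_num at h1 h2
  have ha2 : t * (q.2 - p.2) = 0 := by linear_combination -(1/2 : ℝ) * h1
  have ha1 : t * (q.1 - p.1) = 0 := by linear_combination (1/2 : ℝ) * h2
  rcases mul_eq_zero.mp ha2 with h' | h'
  · exact absurd h' (ne_of_gt htpos)
  · rcases mul_eq_zero.mp ha1 with h'' | h''
    · exact absurd h'' (ne_of_gt htpos)
    · rw [h', h''] at hs0; norm_num at hs0

lemma cos_lt_one_aux (n a : ℕ) (h0 : 0 < n) (h1 : 1 ≤ a) (h2 : a < n) :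
    Real.cos (2*(a:ℝ)*π/(n:ℝ)) < 1 := by
  have hn : (0:ℝ) < n := by exact_mod_cast h0
  have hx0 : 0 < 2*(a:ℝ)*π/(n:ℝ) := by
    have : (1:ℝ) ≤ a := by exact_mod_cast h1
    positivity
  have hx2 : 2*(a:ℝ)*π/(n:ℝ) < 2*π := by
    rw [div_lt_iff₀ hn]
    have : (a:ℝ) < n := by exact_mod_cast h2
    nlinarith [Real.pi_pos]
  refine lt_of_le_of_ne (Real.cos_le_one _) (fun hcos => ?_)
  have := (Real.cos_eq_one_iff_of_lt_of_lt (by linarith [Real.pi_pos]) hx2).mp hcos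
  linarith

lemma cos_ge_aux (n m a : ℕ) (hm : 1 ≤ m) (hnm : n = 2*m+1) (h1 : 1 ≤ a) (h2 : a < n) :
    Real.cos (2*(m:ℝ)*π/(n:ℝ)) ≤ Real.cos (2*(a:ℝ)*π/(n:ℝ)) := by
  have hn : (0:ℝ) < n := by
    have : 0 < n := by omega
    exact_mod_cast this
  have key : ∀ b : ℕ, b ≤ m → Real.cos (2*(m:ℝ)*π/(n:ℝ)) ≤ Real.cos (2*(b:ℝ)*π/(n:ℝ)) := by
    intro b hb
    apply Real.cos_le_cos_of_nonneg_of_le_pi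
    · positivity
    · rw [div_le_iff₀ hn]
      have : (2*m:ℝ) ≤ n := by
        have : (n:ℝ) = 2*m+1 := by exact_mod_cast hnm
        linarith
      nlinarith [Real.pi_pos]
    · gcongr
  by_cases ha : a ≤ m
  · exact key a ha
  · have h2' : a ≤ n := h2.le
    have hrw : 2*(a:ℝ)*π/(n:ℝ) = 2*π - 2*((n-a:ℕ):ℝ)*π/(n:ℝ) := by
      have hcast : ((n-a:ℕ):ℝ) = (n:ℝ) - a := by
        push_cast [Nat.cast_sub h2'] ; ring
      rw [hcast]
      field_simp
      ring
    rw [hrw, Real.cos_two_pi_sub]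
    exact key (n-a) (by omega)

lemma dmax_spec (n : ℕ) (hn : 2 ≤ n) :
    0 < dmax n ∧
    ∀ a : ℕ, 1 ≤ a → a < n → 2 - 2*Real.cos (2*(a:ℝ)*π/(n:ℝ)) ≤ (dmax n)^2 := by
  by_cases he : Even n
  · rw [dmax, if_pos he]
    refine ⟨by norm_num, fun a _ _ => ?_⟩
    nlinarith [Real.neg_one_le_cos (2*(a:ℝ)*π/(n:ℝ))]
  · rw [dmax, if_neg he]
    obtain ⟨m, hm⟩ : ∃ m, n = 2*m+1 := by
      rcases Nat.even_or_odd n with h | ⟨m, hm⟩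
      · exact absurd h he
      · exact ⟨m, by omega⟩
    have hm1 : 1 ≤ m := by omega
    have hn2 : n / 2 = m := by omega
    rw [hn2]
    have hclt : Real.cos (2*(m:ℝ)*π/(n:ℝ)) < 1 :=
      cos_lt_one_aux n m (by omega) hm1 (by omega)
    have harg : 0 < 2 - 2 * Real.cos (2*(m:ℝ)*π/(n:ℝ)) := by linarith
    constructor
    · exact Real.sqrt_pos.mpr harg
    · intro a ha1 ha2
      rw [Real.sq_sqrt harg.le]
      have := cos_ge_aux n m a hm1 hm ha1 ha2
      linarith

lemma sdist_formula (n : ℕ) (R : ℝ) (k j : Fin n) :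
    ((Bpt n R j).1 - (Bpt n R k).1)^2 + ((Bpt n R j).2 - (Bpt n R k).2)^2
      = R^2 * (2 - 2 * Real.cos (2*((j.val:ℝ) - (k.val:ℝ))*π/(n:ℝ))) := by
  simp only [Bpt]
  have hrw : 2*((j.val:ℝ) - (k.val:ℝ))*π/(n:ℝ)
      = 2*(j.val:ℝ)*π/(n:ℝ) - 2*(k.val:ℝ)*π/(n:ℝ) := by ring
  rw [hrw, Real.cos_sub]
  linear_combination R^2 * (Real.sin_sq_add_cos_sq (2*(j.val:ℝ)*π/(n:ℝ)))
    + R^2 * (Real.sin_sq_add_cos_sq (2*(k.val:ℝ)*π/(n:ℝ)))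

lemma sdist_bounds (n : ℕ) (hn : 2 ≤ n) (R : ℝ) (hR0 : 0 < R)
    (hRd : R * dmax n < 2) (k j : Fin n) (hkj : j ≠ k) :
    0 < ((Bpt n R j).1 - (Bpt n R k).1)^2 + ((Bpt n R j).2 - (Bpt n R k).2)^2 ∧
    ((Bpt n R j).1 - (Bpt n R k).1)^2 + ((Bpt n R j).2 - (Bpt n R k).2)^2 < 4 := by
  obtain ⟨hd0, hdb⟩ := dmax_spec n hn
  rw [sdist_formula]
  obtain ⟨a, ha1, ha2, hcos⟩ : ∃ a : ℕ, 1 ≤ a ∧ a < n ∧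
      Real.cos (2*((j.val:ℝ) - (k.val:ℝ))*π/(n:ℝ)) = Real.cos (2*(a:ℝ)*π/(n:ℝ)) := by
    rcases lt_or_gt_of_ne (fun h : j.val = k.val => hkj (Fin.ext h)) with h | h
    · refine ⟨k.val - j.val, by omega, by omega, ?_⟩
      have hc : ((k.val - j.val : ℕ):ℝ) = (k.val:ℝ) - (j.val:ℝ) := by
        push_cast [Nat.cast_sub h.le]; ring
      rw [show 2*((j.val:ℝ) - (k.val:ℝ))*π/(n:ℝ)
          = -(2*(((k.val - j.val : ℕ)):ℝ)*π/(n:ℝ)) by rw [hc]; ring, Real.cos_neg]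
    · refine ⟨j.val - k.val, by omega, by omega, ?_⟩
      have hc : ((j.val - k.val : ℕ):ℝ) = (j.val:ℝ) - (k.val:ℝ) := by
        push_cast [Nat.cast_sub h.le]; ring
      rw [hc]
  rw [hcos]
  have hlt := cos_lt_one_aux n a (by omega) ha1 ha2
  have hle := hdb a ha1 ha2
  constructor
  · have : 0 < 2 - 2*Real.cos (2*(a:ℝ)*π/(n:ℝ)) := by linarith
    positivity
  · nlinarith [mul_le_mul_of_nonneg_left hle (sq_nonneg R), mul_pos hR0 hd0]

noncomputable def vpt (b : ℝ × ℝ) (s : Bool) : ℝ × ℝ := (b.1, b.2 + (if s then 1 else -1))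

lemma vpt_set (b : ℝ × ℝ) :
    {J : ℝ × ℝ | enorm2 (J - b) = 1 ∧ (J - b).1 = 0} = {vpt b true, vpt b false} := by
  ext J
  simp only [Set.mem_setOf_eq, Set.mem_insert_iff, Set.mem_singleton_iff,
    enorm2_eq_one_iff, Prod.fst_sub, Prod.snd_sub]
  constructor
  · rintro ⟨h1, h2⟩
    have hy : (J.2 - b.2 - 1) * (J.2 - b.2 + 1) = 0 := by linear_combination h1 - (J.1-b.1)*h2
    rcases mul_eq_zero.mp hy with h | h
    · left; apply Prod.ext <;> simp [vpt] <;> linarith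
    · right; apply Prod.ext <;> simp [vpt] <;> linarith
  · rintro (h | h) <;> rw [h] <;> constructor <;> simp [vpt]

noncomputable def armpt (n : ℕ) (R : ℝ) (k j : Fin n) (s : Bool) : ℝ × ℝ :=
  if j = k then vpt (Bpt n R k) s else ipt (Bpt n R k) (Bpt n R j) s

noncomputable def phi (n : ℕ) (R : ℝ) :
    Fin n × (Fin n → Bool) → (ℝ × ℝ) × (Fin n → ℝ × ℝ) :=
  fun z => (Bpt n R z.1, fun j => armpt n R z.1 j (z.2 j))

lemma armpt_ne (n : ℕ) (hn : 2 ≤ n) (R : ℝ) (hR0 : 0 < R) (hRd : R * dmax n < 2)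
    (k j : Fin n) : armpt n R k j true ≠ armpt n R k j false := by
  unfold armpt
  by_cases hj : j = k
  · rw [if_pos hj, if_pos hj]
    intro h
    have := congrArg Prod.snd h
    simp [vpt] at this
    linarith
  · rw [if_neg hj, if_neg hj]
    obtain ⟨h0, h4⟩ := sdist_bounds n hn R hR0 hRd k j hj
    exact ipt_ne _ _ h0 h4

/-- Suppose `0 < R < R_n`. The set of configurations in `M_n(R)` having a folded
arm parallel to the y-axis (some `k` with `C = B_k` and first coordinate of
`J_k − B_k` zero) is finite, with exactly `n·2^n` elements. -/
theorem stmt18 (n : ℕ) (hn : 2 ≤ n) (R : ℝ) (hR0 : 0 < R) (hRn : R < Rcrit n) :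
    {x ∈ MSpace n R | ∃ k : Fin n,
        x.1 = Bpt n R k ∧ (x.2 k - Bpt n R k).1 = 0}.Finite ∧
    {x ∈ MSpace n R | ∃ k : Fin n,
        x.1 = Bpt n R k ∧ (x.2 k - Bpt n R k).1 = 0}.ncard = n * 2 ^ n := by
  rw [Rcrit] at hRn
  classical
  obtain ⟨hd0, _⟩ := dmax_spec n hn
  have hRd : R * dmax n < 2 := (lt_div_iff₀ hd0).mp hRn
  have hBinj : Function.Injective (Bpt n R) := by
    intro k j h
    by_contra hne
    have hb := (sdist_bounds n hn R hR0 hRd k j (fun hh => hne (hh.symm))).1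
    rw [h] at hb
    simp at hb
  have hrange : {x ∈ MSpace n R | ∃ k : Fin n,
      x.1 = Bpt n R k ∧ (x.2 k - Bpt n R k).1 = 0} = Set.range (phi n R) := by
    ext x
    simp only [Set.mem_setOf_eq, Set.mem_range]
    constructor
    · rintro ⟨hM, k, hk1, hk2⟩
      refine ⟨(k, fun j => if x.2 j = armpt n R k j true then true else false), ?_⟩
      apply Prod.ext
      · exact hk1.symm
      · funext j
        show armpt n R k j (if x.2 j = armpt n R k j true then true else false) = x.2 j
        by_cases hj : j = k
        · subst hj
          have hmem : x.2 j = vpt (Bpt n R j) true ∨ x.2 j = vpt (Bpt n R j) false := by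
            have hv : x.2 j ∈ ({vpt (Bpt n R j) true, vpt (Bpt n R j) false} :
                Set (ℝ × ℝ)) := by
              rw [← vpt_set]
              exact ⟨(hM j).2, hk2⟩
            exact hv
          by_cases ht : x.2 j = armpt n R j j true
          · rw [if_pos ht]; exact ht.symm
          · rw [if_neg ht]
            rcases hmem with h | h
            · exact absurd (by simp [armpt, h]) ht
            · simp [armpt, h]
        · obtain ⟨h0, h4⟩ := sdist_bounds n hn R hR0 hRd k j hj
          have hmem : x.2 j ∈ ({ipt (Bpt n R k) (Bpt n R j) true,
              ipt (Bpt n R k) (Bpt n R j) false} : Set (ℝ × ℝ)) := by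
            rw [← circle_set _ _ h0 h4]
            refine ⟨?_, (hM j).2⟩
            rw [← hk1]
            exact (hM j).1
          by_cases ht : x.2 j = armpt n R k j true
          · rw [if_pos ht]; exact ht.symm
          · rw [if_neg ht]
            rcases hmem with h | h
            · exact absurd (by simp [armpt, if_neg hj, h]) ht
            · simp only [Set.mem_singleton_iff] at h
              simp [armpt, if_neg hj, h]
    · rintro ⟨⟨k, ε⟩, rfl⟩
      refine ⟨?_, k, rfl, ?_⟩
      · intro j
        show enorm2 (Bpt n R k - armpt n R k j (ε j)) = 1 ∧
          enorm2 (armpt n R k j (ε j) - Bpt n R j) = 1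
        by_cases hj : j = k
        · subst hj
          simp only [armpt, if_pos rfl]
          constructor <;>
          · rw [enorm2_eq_one_iff]
            cases ε j <;> simp [vpt] <;> norm_num
        · obtain ⟨h0, h4⟩ := sdist_bounds n hn R hR0 hRd k j hj
          simp only [armpt, if_neg hj]
          have hmem : ipt (Bpt n R k) (Bpt n R j) (ε j) ∈
              ({ipt (Bpt n R k) (Bpt n R j) true,
                ipt (Bpt n R k) (Bpt n R j) false} : Set (ℝ × ℝ)) := by
            cases ε j
            · right; rfl
            · left; rfl
          rw [← circle_set _ _ h0 h4] at hmem
          exact hmem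
      · show (armpt n R k k (ε k) - Bpt n R k).1 = 0
        simp [armpt, vpt]
  have hinj : Function.Injective (phi n R) := by
    rintro ⟨k, ε⟩ ⟨k', ε'⟩ h
    have h1 : Bpt n R k = Bpt n R k' := congrArg Prod.fst h
    have hk : k = k' := hBinj h1
    subst hk
    have h2 : ∀ j, armpt n R k j (ε j) = armpt n R k j (ε' j) :=
      fun j => congrFun (congrArg Prod.snd h) j
    have hee : ε = ε' := by
      funext j
      by_contra hne
      have hne' : armpt n R k j true = armpt n R k j false := by
        cases hb : ε j <;> cases hb' : ε' j
        · exact absurd rfl (by rw [hb, hb'] at hne; exact hne)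
        · have := h2 j; rw [hb, hb'] at this; exact this.symm
        · have := h2 j; rw [hb, hb'] at this; exact this
        · exact absurd rfl (by rw [hb, hb'] at hne; exact hne)
      exact armpt_ne n hn R hR0 hRd k j hne'
    rw [hee]
  constructor
  · rw [hrange]; exact Set.finite_range _
  · rw [hrange, ← Nat.card_coe_set_eq, Nat.card_range_of_injective hinj]
    simp [Nat.card_eq_fintype_card]
end
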